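/- Let 𝔥 be a nonzero complex Hilbert space and 𝒫, ℛ anti-commuting unitary involutions on 𝔥 (𝒫ℛ = −ℛ𝒫). Let T = α₀·I + α₁·𝒫 + α₂·ℛ + α₃·(iℛ𝒫) where α₀, α₁, α₃ are real and α₂ is purely imaginary, let ξ ∈ ℝ, and set 𝒫_ξ := exp(iξℛ)𝒫. Then T𝒫_ξ = 𝒫_ξT* (where T* is the Hilbert-space adjoint of T) if and only if α₁ sin ξ = α₃ cos ξ. Consequently, for every such T there exists ξ ∈ [0, 2π) with T𝒫_ξ = 𝒫_ξT*. -/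

import Mathlib

/-!
Since `ℛ² = 1`, `exp(iξℛ) = cos ξ + i sin ξ ℛ`. As `𝒫` and `ℛ` are self-adjoint and
anticommute, `(iℛ𝒫)* = iℛ𝒫`, so taking the adjoint of `T` only flips the sign of its
`ℛ`-coefficient. Multiplying out with the relations `𝒫² = ℛ² = 1`, `𝒫ℛ = -ℛ𝒫` gives
`T𝒫_ξ - 𝒫_ξT* = 2i(α₃ cos ξ - α₁ sin ξ) ℛ`, which vanishes iff `α₁ sin ξ = α₃ cos ξ`
because `ℛ ≠ 0`. The argument of `α₁ + iα₃`, reduced mod `2π`, solves this equation.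
-/

open scoped InnerProductSpace Real

section

open Complex

lemma NormedSpace.exp_smul_of_mul_self_eq_one {A : Type*} [NormedRing A] [NormedAlgebra ℂ A]
    [CompleteSpace A] (z : ℂ) {r : A} (hr : r * r = 1) :
    NormedSpace.exp (z • r) = cosh z • (1 : A) + sinh z • r := by
  have hr_even (k : ℕ) : r ^ (2 * k) = 1 := by rw [pow_mul, sq, hr, one_pow]
  rw [NormedSpace.exp_eq_tsum (𝕂 := ℂ)]
  refine HasSum.tsum_eq (HasSum.even_add_odd ?_ ?_)
  · convert (hasSum_cosh z).smul_const (1 : A) using 2 with k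
    rw [smul_pow, hr_even, smul_smul, div_eq_inv_mul]
  · convert (hasSum_sinh z).smul_const r using 2 with k
    rw [smul_pow, pow_succ r, hr_even, one_mul, smul_smul, div_eq_inv_mul]

lemma NormedSpace.exp_I_mul_smul_of_mul_self_eq_one {A : Type*} [NormedRing A]
    [NormedAlgebra ℂ A] [CompleteSpace A] (ξ : ℝ) {r : A} (hr : r * r = 1) :
    NormedSpace.exp ((I * ξ) • r) = (Real.cos ξ : ℂ) • (1 : A) + (I * Real.sin ξ) • r := by
  rw [NormedSpace.exp_smul_of_mul_self_eq_one _ hr, mul_comm, cosh_mul_I, sinh_mul_I,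
    ← ofReal_cos, ← ofReal_sin, mul_comm]

section Pauli

variable {A : Type*} [Ring A] [Algebra ℂ A] {P R : A}

def pauliCombination (P R : A) (α₀ α₁ α₃ a₂ : ℝ) : A :=
  (α₀ : ℂ) • 1 + (α₁ : ℂ) • P + (I * a₂) • R + (α₃ : ℂ) • (I • (R * P))

lemma pauliCombination_mul_sub_mul (hP : P * P = 1) (hR : R * R = 1) (hPR : P * R = -(R * P))
    (α₀ α₁ α₃ a₂ c s : ℝ) :
    pauliCombination P R α₀ α₁ α₃ a₂ * (((c : ℂ) • 1 + (I * s) • R) * P)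
        - (((c : ℂ) • 1 + (I * s) • R) * P) * pauliCombination P R α₀ α₁ α₃ (-a₂)
      = (2 * I * (α₃ * c - α₁ * s)) • R := by
  have hR' (x : A) : R * (R * x) = x := by rw [← mul_assoc, hR, one_mul]
  have hPR' (x : A) : P * (R * x) = -(R * (P * x)) := by
    rw [← mul_assoc, hPR, neg_mul, mul_assoc]
  simp only [pauliCombination, mul_add, add_mul, smul_mul_assoc, mul_smul_comm, mul_assoc,
    mul_one, one_mul, hP, hR, hPR, hR', hPR', mul_neg, smul_neg]
  match_scalars <;> ring

variable [StarRing A] [StarModule ℂ A]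

lemma star_pauliCombination (hP : IsSelfAdjoint P) (hR : IsSelfAdjoint R)
    (hPR : P * R = -(R * P)) (α₀ α₁ α₃ a₂ : ℝ) :
    star (pauliCombination P R α₀ α₁ α₃ a₂) = pauliCombination P R α₀ α₁ α₃ (-a₂) := by
  simp only [pauliCombination, star_add, star_smul, star_one, star_mul, hP.star_eq, hR.star_eq,
    star_def, conj_I, conj_ofReal, hPR]
  match_scalars <;> ring

lemma pauliCombination_mul_eq_mul_star_iff [Nontrivial A] (hP : IsSelfAdjoint P)
    (hR : IsSelfAdjoint R) (hPP : P * P = 1) (hRR : R * R = 1) (hPR : P * R = -(R * P))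
    (α₀ α₁ α₃ a₂ c s : ℝ) :
    pauliCombination P R α₀ α₁ α₃ a₂ * (((c : ℂ) • 1 + (I * s) • R) * P)
        = (((c : ℂ) • 1 + (I * s) • R) * P) * star (pauliCombination P R α₀ α₁ α₃ a₂)
      ↔ α₁ * s = α₃ * c := by
  have hR0 : R ≠ 0 := by
    rintro rfl
    simp at hRR
  rw [← sub_eq_zero, star_pauliCombination hP hR hPR, pauliCombination_mul_sub_mul hPP hRR hPR,
    smul_eq_zero, or_iff_left hR0, mul_eq_zero, or_iff_right (by simp), sub_eq_zero, eq_comm]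
  exact_mod_cast Iff.rfl

end Pauli

end

section InvolutiveIsometry

variable {𝕜 E : Type*} [RCLike 𝕜] [NormedAddCommGroup E] [InnerProductSpace 𝕜 E]
  {U : E →L[𝕜] E}

lemma ContinuousLinearMap.mul_self_eq_one_of_involutive (h : ∀ f, U (U f) = f) : U * U = 1 :=
  ContinuousLinearMap.ext h

lemma ContinuousLinearMap.isSelfAdjoint_of_involutive_of_inner_map_map [CompleteSpace E]
    (h : ∀ f, U (U f) = f) (hinner : ∀ f g, ⟪U f, U g⟫_𝕜 = ⟪f, g⟫_𝕜) : IsSelfAdjoint U := by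
  refine isSelfAdjoint_iff'.mpr ((U.eq_adjoint_iff U).mpr fun f g => ?_).symm
  rw [← hinner, h]

end InvolutiveIsometry

lemma exists_mem_Ico_mul_sin_eq_mul_cos (a b : ℝ) :
    ∃ ξ ∈ Set.Ico 0 (2 * π), a * Real.sin ξ = b * Real.cos ξ := by
  set z : ℂ := ⟨a, b⟩
  refine ⟨toIcoMod Real.two_pi_pos 0 z.arg, toIcoMod_mem_Ico' _ _, ?_⟩
  rw [← self_sub_toIcoDiv_zsmul, zsmul_eq_mul, Real.sin_sub_int_mul_two_pi,
    Real.cos_sub_int_mul_two_pi]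
  have hcos : ‖z‖ * Real.cos z.arg = a := Complex.norm_mul_cos_arg z
  have hsin : ‖z‖ * Real.sin z.arg = b := Complex.norm_mul_sin_arg z
  rcases eq_or_ne z 0 with hz | hz
  · obtain ⟨rfl, rfl⟩ : a = 0 ∧ b = 0 := Complex.ext_iff.mp hz
    simp
  · apply mul_left_cancel₀ (norm_ne_zero_iff.mpr hz)
    linear_combination a * hsin - b * hcos

/-- for `T = α₀I + α₁𝒫 + α₂ℛ + α₃ iℛ𝒫` with `α₀, α₁, α₃` real and `α₂`
purely imaginary, `T𝒫_ξ = 𝒫_ξT*` holds iff `α₁ sin ξ = α₃ cos ξ`; consequently there is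
always some `ξ ∈ [0, 2π)` for which `T` is self-adjoint in the Krein space of `𝒫_ξ`. -/
theorem krein_selfAdjoint_iff_angle
    {𝕳 : Type*} [NormedAddCommGroup 𝕳] [InnerProductSpace ℂ 𝕳] [CompleteSpace 𝕳]
    [Nontrivial 𝕳]
    (P R : 𝕳 →L[ℂ] 𝕳)
    (hP2 : ∀ f, P (P f) = f)
    (hPinner : ∀ f g : 𝕳, ⟪P f, P g⟫_ℂ = ⟪f, g⟫_ℂ)
    (hR2 : ∀ f, R (R f) = f)
    (hRinner : ∀ f g : 𝕳, ⟪R f, R g⟫_ℂ = ⟪f, g⟫_ℂ)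
    (hanti : P ∘L R = -(R ∘L P))
    (α₀ α₁ α₃ a₂ : ℝ)
    (T : 𝕳 →L[ℂ] 𝕳)
    (hT : T = (α₀ : ℂ) • (1 : 𝕳 →L[ℂ] 𝕳) + (α₁ : ℂ) • P
        + (Complex.I * (a₂ : ℂ)) • R + (α₃ : ℂ) • (Complex.I • (R ∘L P)))
    (ξ : ℝ)
    (Pξ : 𝕳 →L[ℂ] 𝕳)
    (hPξ : Pξ = NormedSpace.exp ((Complex.I * (ξ : ℂ)) • R) ∘L P) :
    (T ∘L Pξ = Pξ ∘L ContinuousLinearMap.adjoint T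
      ↔ α₁ * Real.sin ξ = α₃ * Real.cos ξ)
    ∧ ∃ ξ' ∈ Set.Ico (0 : ℝ) (2 * π),
        T ∘L (NormedSpace.exp ((Complex.I * (ξ' : ℂ)) • R) ∘L P)
          = (NormedSpace.exp ((Complex.I * (ξ' : ℂ)) • R) ∘L P)
              ∘L ContinuousLinearMap.adjoint T := by
  have hRR := ContinuousLinearMap.mul_self_eq_one_of_involutive hR2
  have key (θ : ℝ) :
      T ∘L (NormedSpace.exp ((Complex.I * (θ : ℂ)) • R) ∘L P)
          = (NormedSpace.exp ((Complex.I * (θ : ℂ)) • R) ∘L P) ∘L ContinuousLinearMap.adjoint T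
        ↔ α₁ * Real.sin θ = α₃ * Real.cos θ := by
    rw [NormedSpace.exp_I_mul_smul_of_mul_self_eq_one θ hRR, ← ContinuousLinearMap.star_eq_adjoint,
      hT]
    exact pauliCombination_mul_eq_mul_star_iff
      (ContinuousLinearMap.isSelfAdjoint_of_involutive_of_inner_map_map hP2 hPinner)
      (ContinuousLinearMap.isSelfAdjoint_of_involutive_of_inner_map_map hR2 hRinner)
      (ContinuousLinearMap.mul_self_eq_one_of_involutive hP2) hRR hanti α₀ α₁ α₃ a₂ _ _
  obtain ⟨ξ', hξ', hangle⟩ := exists_mem_Ico_mul_sin_eq_mul_cos α₁ α₃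
  exact ⟨hPξ ▸ key ξ, ξ', hξ', (key ξ').mpr hangle⟩
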